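/- Let ζ ∈ ℂ be a primitive cube root of unity and let g₃, a, b, c, A, B, C ∈ ℂ satisfy A² = 4a³ − g₃, B² = 4b³ − g₃, C² = 4c³ − g₃. Then the product of the three determinants det[[1, a, A], [1, b, B], [1, c, C]] · det[[1, a, A], [1, ζb, B], [1, ζ²c, C]] · det[[1, a, A], [1, ζ²b, B], [1, ζc, C]] equals (1/4)·(A − C)·(B − C)·(B − A)·(AB + BC + CA + 3g₃ − 12abc). -/

import Mathlib

/-!
Expanding along the column of ones, the three determinants are `u + v + w`, `u + ζ v + ζ² w` and
`u + ζ² v + ζ w` with `u = a (B - C)`, `v = b (C - A)`, `w = c (A - B)`, so their product is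
`u³ + v³ + w³ - 3uvw`. After replacing `4a³, 4b³, 4c³` by `A² + g₃, B² + g₃, C² + g₃`, four times this
factors as claimed.
-/

theorem IsPrimitiveRoot.sq_add_self_add_one {R : Type*} [CommRing R] [IsDomain R] {ζ : R}
    (hζ : IsPrimitiveRoot ζ 3) : ζ ^ 2 + ζ + 1 = 0 := by
  have h := hζ.geom_sum_eq_zero (by norm_num)
  simp only [Finset.sum_range_succ, Finset.sum_range_zero] at h
  linear_combination h

theorem Matrix.det_fin_three_of_col_zero_eq_one {R : Type*} [CommRing R] (a b c A B C : R) :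
    !![1, a, A; 1, b, B; 1, c, C].det = a * (B - C) + b * (C - A) + c * (A - B) := by
  rw [Matrix.det_fin_three]
  simp only [Matrix.of_apply, Matrix.cons_val', Matrix.cons_val_zero, Matrix.cons_val_one,
    Matrix.cons_val_two, Matrix.empty_val', Matrix.cons_val_fin_one, Matrix.head_cons,
    Matrix.tail_cons, Matrix.head_fin_const]
  ring

theorem sum_cubes_sub_three_mul_eq_mul {R : Type*} [CommRing R] {ζ : R}
    (hζ : ζ ^ 2 + ζ + 1 = 0) (u v w : R) :
    u ^ 3 + v ^ 3 + w ^ 3 - 3 * u * v * w =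
      (u + v + w) * (u + ζ * v + ζ ^ 2 * w) * (u + ζ ^ 2 * v + ζ * w) := by
  linear_combination
    -(u + v + w) * (u * v + u * w + (ζ - 1) * (v ^ 2 + w ^ 2) + (ζ ^ 2 - ζ + 1) * v * w) * hζ

theorem four_mul_sum_cubes_of_weierstrass {R : Type*} [CommRing R] {g₃ a b c A B C : R}
    (hA : A ^ 2 = 4 * a ^ 3 - g₃) (hB : B ^ 2 = 4 * b ^ 3 - g₃) (hC : C ^ 2 = 4 * c ^ 3 - g₃) :
    4 * ((a * (B - C)) ^ 3 + (b * (C - A)) ^ 3 + (c * (A - B)) ^ 3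
        - 3 * (a * (B - C)) * (b * (C - A)) * (c * (A - B))) =
      (A - C) * (B - C) * (B - A) * (A * B + B * C + C * A + 3 * g₃ - 12 * a * b * c) := by
  linear_combination -(B - C) ^ 3 * hA - (C - A) ^ 3 * hB - (A - B) ^ 3 * hC

/-- the algebraic identity underlying the product of three
Frobenius–Stickelberger determinants in the equianharmonic case `g₂ = 0`. -/
theorem frobenius_stickelberger_determinant_product
    (ζ : ℂ) (hζ : IsPrimitiveRoot ζ 3)
    (g₃ a b c A B C : ℂ)
    (hA : A ^ 2 = 4 * a ^ 3 - g₃)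
    (hB : B ^ 2 = 4 * b ^ 3 - g₃)
    (hC : C ^ 2 = 4 * c ^ 3 - g₃) :
    Matrix.det !![1, a, A; 1, b, B; 1, c, C] *
        Matrix.det !![1, a, A; 1, ζ * b, B; 1, ζ ^ 2 * c, C] *
        Matrix.det !![1, a, A; 1, ζ ^ 2 * b, B; 1, ζ * c, C]
      = (1 / 4) * (A - C) * (B - C) * (B - A) *
          (A * B + B * C + C * A + 3 * g₃ - 12 * a * b * c) := by
  simp only [Matrix.det_fin_three_of_col_zero_eq_one]
  calc _ = (a * (B - C) + b * (C - A) + c * (A - B)) *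
          (a * (B - C) + ζ * (b * (C - A)) + ζ ^ 2 * (c * (A - B))) *
          (a * (B - C) + ζ ^ 2 * (b * (C - A)) + ζ * (c * (A - B))) := by ring
    _ = (a * (B - C)) ^ 3 + (b * (C - A)) ^ 3 + (c * (A - B)) ^ 3
          - 3 * (a * (B - C)) * (b * (C - A)) * (c * (A - B)) :=
        (sum_cubes_sub_three_mul_eq_mul hζ.sq_add_self_add_one _ _ _).symm
    _ = _ := by linear_combination (1 / 4 : ℂ) * four_mul_sum_cubes_of_weierstrass hA hB hC
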